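/- arXiv:2205.12435 — 2 statements merged into one kernel-verified Lean document; each statement's English description precedes it below -/
import Mathlib

section
/- Let V = ℤ^{2g} with the standard symplectic form and W ⊆ V a ℤ-submodule invariant under all transvections T_β with β primitive. If α = Σ_{i=1}^g (a_i δ_i + b_i γ_i) ∈ W and d = gcd(a_1, b_1, …, a_g, b_g), then d·V ⊆ W. -/
open Finset Pointwise

/-- `V g = ℤ^{2g}`, written as pairs of `δ`- and `γ`-coordinates. -/
abbrev V (g : ℕ) : Type := (Fin g → ℤ) × (Fin g → ℤ)

/-- The standard symplectic form on `V g`. -/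
def symp (g : ℕ) (v w : V g) : ℤ := ∑ i, (v.1 i * w.2 i - v.2 i * w.1 i)

/-- A vector is primitive if the gcd of its coordinates is `1`. -/
def Primitive (g : ℕ) (v : V g) : Prop :=
  Finset.univ.gcd (fun i => Int.gcd (v.1 i) (v.2 i)) = 1

/-- The transvection along `β`. -/
def T (g : ℕ) (β α : V g) : V g := α + symp g α β • β

/-- The basis vector `δ i`. -/
def δ (g : ℕ) (i : Fin g) : V g := (Pi.single i 1, 0)

/-- The basis vector `γ i`. -/
def γ (g : ℕ) (i : Fin g) : V g := (0, Pi.single i 1)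

/- ===== auxiliary lemmas ===== -/

lemma prim_of_one {g : ℕ} (v : V g) (i : Fin g) (h : Int.gcd (v.1 i) (v.2 i) = 1) :
    Primitive g v :=
  Nat.dvd_one.mp (h ▸ Finset.gcd_dvd (Finset.mem_univ i))

lemma symp_smul_left {g : ℕ} (c : ℤ) (w β : V g) :
    symp g (c • w) β = c * symp g w β := by
  simp [symp, Finset.mul_sum, mul_sub, mul_assoc]

lemma symp_add_right {g : ℕ} (w β₁ β₂ : V g) :
    symp g w (β₁ + β₂) = symp g w β₁ + symp g w β₂ := by
  simp only [symp, Prod.fst_add, Prod.snd_add, Pi.add_apply, ← Finset.sum_add_distrib]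
  exact Finset.sum_congr rfl fun k _ => by ring

lemma symp_δδ {g : ℕ} (i j : Fin g) : symp g (δ g i) (δ g j) = 0 := by
  simp [symp, δ]

lemma symp_γγ {g : ℕ} (i j : Fin g) : symp g (γ g i) (γ g j) = 0 := by
  simp [symp, γ]

lemma symp_δγ {g : ℕ} (i j : Fin g) :
    symp g (δ g i) (γ g j) = if i = j then 1 else 0 := by
  simp [symp, δ, γ, Pi.single_apply]
  exact if_congr eq_comm rfl rfl

lemma symp_γδ {g : ℕ} (i j : Fin g) :
    symp g (γ g i) (δ g j) = if i = j then -1 else 0 := by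
  simp [symp, δ, γ, Pi.single_apply]
  by_cases h : i = j <;> simp [h, eq_comm]

lemma symp_pair_γ {g : ℕ} (a b : Fin g → ℤ) (i : Fin g) :
    symp g ((a, b) : V g) (γ g i) = a i := by
  simp [symp, γ, Pi.single_apply, mul_ite]

lemma symp_pair_δ {g : ℕ} (a b : Fin g → ℤ) (i : Fin g) :
    symp g ((a, b) : V g) (δ g i) = -(b i) := by
  simp [symp, δ, Pi.single_apply, mul_ite]

lemma gcd_smul_mem {ι : Type*} {g : ℕ}
    (W : Submodule ℤ (V g)) (u : V g) (s : Finset ι) (f : ι → ℕ)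
    (h : ∀ j ∈ s, (f j : ℤ) • u ∈ W) : ((s.gcd f : ℕ) : ℤ) • u ∈ W := by
  classical
  induction s using Finset.induction with
  | empty => simpa using W.zero_mem
  | @insert x s hx ih =>
    have hm : (f x : ℤ) • u ∈ W := h x (Finset.mem_insert_self _ _)
    have hn : ((s.gcd f : ℕ) : ℤ) • u ∈ W := ih fun j hj => h j (Finset.mem_insert_of_mem hj)
    rw [Finset.gcd_insert]
    have hgcd : (((GCDMonoid.gcd (f x) (s.gcd f) : ℕ)) : ℤ)
        = (f x : ℤ) * Int.gcdA (f x : ℤ) ((s.gcd f : ℕ) : ℤ)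
          + ((s.gcd f : ℕ) : ℤ) * Int.gcdB (f x : ℤ) ((s.gcd f : ℕ) : ℤ) := by
      rw [← Int.gcd_eq_gcd_ab, Int.gcd_natCast_natCast]
      rfl
    rw [hgcd, add_smul, mul_comm, mul_smul, mul_comm ((s.gcd f : ℕ) : ℤ), mul_smul]
    exact W.add_mem (W.smul_mem _ hm) (W.smul_mem _ hn)

/-- If `W` is invariant under transvections along primitive vectors,
`α = Σ aᵢ δᵢ + bᵢ γᵢ ∈ W` and `d = gcd(a₁,b₁,…,a_g,b_g)`, then `d·V ⊆ W`. -/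
theorem gcd_smul_subset (g : ℕ) (hg : 1 ≤ g) (W : Submodule ℤ (V g))
    (hW : ∀ β : V g, Primitive g β → ∀ w ∈ W, T g β w ∈ W)
    (a b : Fin g → ℤ) (hα : ((a, b) : V g) ∈ W)
    (d : ℕ) (hd : d = Finset.univ.gcd (fun i => Int.gcd (a i) (b i))) :
    ∀ v : V g, (d : ℤ) • v ∈ W := by
  classical
  -- key: increments of transvections stay in W
  have key : ∀ β : V g, Primitive g β → ∀ w ∈ W, symp g w β • β ∈ W := by
    intro β hβ w hw
    have := W.sub_mem (hW β hβ w hw) hw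
    simp only [T, add_sub_cancel_left] at this
    exact this
  -- primitivity facts
  have primδ : ∀ i : Fin g, Primitive g (δ g i) := fun i =>
    prim_of_one _ i (by simp [δ])
  have primγ : ∀ i : Fin g, Primitive g (γ g i) := fun i =>
    prim_of_one _ i (by simp [γ])
  have primδγ : ∀ i j : Fin g, Primitive g (δ g i + γ g j) := fun i j =>
    prim_of_one _ i (by simp [δ, γ, Int.gcd])
  have primγγ : ∀ i j : Fin g, i ≠ j → Primitive g (γ g i + γ g j) := fun i j hij =>
    prim_of_one _ i (by simp [γ, Pi.single_apply, hij.symm, Int.gcd])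
  -- step 1/2
  have h1 : ∀ i, a i • γ g i ∈ W := by
    intro i
    have := key (γ g i) (primγ i) _ hα
    rwa [symp_pair_γ] at this
  have h2 : ∀ i, b i • δ g i ∈ W := by
    intro i
    have := key (δ g i) (primδ i) _ hα
    rw [symp_pair_δ] at this
    have := W.neg_mem this
    rwa [← neg_smul, neg_neg] at this
  -- step 3/4
  have h3 : ∀ i, b i • γ g i ∈ W := by
    intro i
    have hk := key (δ g i + γ g i) (primδγ i i) _ (h2 i)
    rw [symp_smul_left, symp_add_right, symp_δδ, symp_δγ, if_pos rfl] at hk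
    simp only [zero_add, mul_one, smul_add] at hk
    simpa using W.sub_mem hk (h2 i)
  have h4 : ∀ i, a i • δ g i ∈ W := by
    intro i
    have hk := key (δ g i + γ g i) (primδγ i i) _ (h1 i)
    rw [symp_smul_left, symp_add_right, symp_γδ, symp_γγ, if_pos rfl] at hk
    simp only [add_zero, mul_neg, mul_one, neg_smul, smul_add] at hk
    have := W.add_mem (W.neg_mem hk) (W.neg_mem (h1 i))
    simpa using this
  -- step 5: gcd of the i-th pair
  set D : Fin g → ℕ := fun i => Int.gcd (a i) (b i) with hD
  have h5δ : ∀ i, ((D i : ℕ) : ℤ) • δ g i ∈ W := by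
    intro i
    have hb := Int.gcd_eq_gcd_ab (a i) (b i)
    rw [hD]
    show ((Int.gcd (a i) (b i) : ℕ) : ℤ) • δ g i ∈ W
    rw [hb, add_smul, mul_comm, mul_smul, mul_comm (b i), mul_smul]
    exact W.add_mem (W.smul_mem _ (h4 i)) (W.smul_mem _ (h2 i))
  have h5γ : ∀ i, ((D i : ℕ) : ℤ) • γ g i ∈ W := by
    intro i
    have hb := Int.gcd_eq_gcd_ab (a i) (b i)
    rw [hD]
    show ((Int.gcd (a i) (b i) : ℕ) : ℤ) • γ g i ∈ W
    rw [hb, add_smul, mul_comm, mul_smul, mul_comm (b i), mul_smul]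
    exact W.add_mem (W.smul_mem _ (h1 i)) (W.smul_mem _ (h3 i))
  -- step 6/7: transport across indices
  have h6 : ∀ j i, ((D j : ℕ) : ℤ) • δ g i ∈ W := by
    intro j i
    have hk := key (δ g i + γ g j) (primδγ i j) _ (h5δ j)
    rw [symp_smul_left, symp_add_right, symp_δδ, symp_δγ, if_pos rfl] at hk
    simp only [zero_add, mul_one, smul_add] at hk
    simpa using W.sub_mem hk (h5γ j)
  have h7 : ∀ j i, ((D j : ℕ) : ℤ) • γ g i ∈ W := by
    intro j i
    by_cases hij : i = j
    · subst hij; exact h5γ i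
    · have hk := key (γ g i + γ g j) (primγγ i j hij) _ (h5δ j)
      rw [symp_smul_left, symp_add_right, symp_δγ, symp_δγ, if_pos rfl,
        if_neg (fun h => hij h.symm)] at hk
      simp only [zero_add, mul_one, smul_add] at hk
      simpa using W.sub_mem hk (h5γ j)
  -- step 8: full gcd
  have h8δ : ∀ i, (d : ℤ) • δ g i ∈ W := by
    intro i
    rw [hd]
    exact gcd_smul_mem W (δ g i) Finset.univ D (fun j _ => h6 j i)
  have h8γ : ∀ i, (d : ℤ) • γ g i ∈ W := by
    intro i
    rw [hd]
    exact gcd_smul_mem W (γ g i) Finset.univ D (fun j _ => h7 j i)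
  -- finish
  intro v
  have hv : v = (∑ i, v.1 i • δ g i) + ∑ i, v.2 i • γ g i := by
    refine Prod.ext ?_ ?_ <;> funext k <;>
      simp [δ, γ, Prod.fst_sum, Prod.snd_sum, Finset.sum_apply, Pi.mul_apply,
        Pi.single_apply, Finset.sum_ite_eq, mul_ite]
  rw [hv, smul_add, Finset.smul_sum, Finset.smul_sum]
  refine W.add_mem (Submodule.sum_mem W fun i _ => ?_) (Submodule.sum_mem W fun i _ => ?_) <;>
    rw [smul_comm]
  · exact W.smul_mem _ (h8δ i)
  · exact W.smul_mem _ (h8γ i)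
end

section
/- Let V = ℤ^{2g} with the standard symplectic form, and let W be a nonzero ℤ-submodule of V invariant under all transvections T_β with β primitive. Then there exists a positive integer m with W = mV. Moreover m is the minimal positive gcd of the coordinate vectors of elements of W. -/
open Finset Pointwise

/-- The gcd of the coordinates of a vector in `ℤ^{2g}`. -/
def coordGcd (g : ℕ) (v : V g) : ℕ :=
  Finset.univ.gcd (fun i => Int.gcd (v.1 i) (v.2 i))

lemma symp_delta (g : ℕ) (w : V g) (j : Fin g) : symp g w (δ g j) = -w.2 j := by
  simp [symp, δ, Pi.single_apply, Finset.sum_sub_distrib]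

lemma symp_gamma (g : ℕ) (w : V g) (j : Fin g) : symp g w (γ g j) = w.1 j := by
  simp [symp, γ, Pi.single_apply, Finset.sum_sub_distrib]

lemma symp_dg (g : ℕ) (w : V g) (i j : Fin g) :
    symp g w (δ g j + γ g i) = w.1 i - w.2 j := by
  simp [symp, δ, γ, Pi.single_apply, Finset.sum_sub_distrib, mul_add, add_mul]

lemma prim_delta (g : ℕ) (i : Fin g) : Primitive g (δ g i) := by
  refine Nat.dvd_one.mp ?_
  have := Finset.gcd_dvd (f := fun k => Int.gcd ((δ g i).1 k) ((δ g i).2 k)) (Finset.mem_univ i)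
  simpa [δ, Pi.single_apply] using this

lemma prim_gamma (g : ℕ) (i : Fin g) : Primitive g (γ g i) := by
  refine Nat.dvd_one.mp ?_
  have := Finset.gcd_dvd (f := fun k => Int.gcd ((γ g i).1 k) ((γ g i).2 k)) (Finset.mem_univ i)
  simpa [γ, Pi.single_apply] using this

lemma prim_dg (g : ℕ) (i j : Fin g) : Primitive g (δ g j + γ g i) := by
  refine Nat.dvd_one.mp ?_
  have := Finset.gcd_dvd (f := fun k => Int.gcd ((δ g j + γ g i).1 k) ((δ g j + γ g i).2 k)) (Finset.mem_univ j)
  simpa [δ, γ, Pi.single_apply] using this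

lemma smul_delta_fst (g : ℕ) (c : ℤ) (i : Fin g) : (c • δ g i).1 i = c := by
  simp [δ]

lemma smul_delta_snd (g : ℕ) (c : ℤ) (i j : Fin g) : (c • δ g i).2 j = 0 := by
  simp [δ]

lemma smul_gamma_fst (g : ℕ) (c : ℤ) (i j : Fin g) : (c • γ g i).1 j = 0 := by
  simp [γ]

lemma smul_gamma_snd (g : ℕ) (c : ℤ) (i : Fin g) : (c • γ g i).2 i = c := by
  simp [γ]

lemma smul_mem_of_basis {g : ℕ} (W : Submodule ℤ (V g)) (c : ℤ)
    (h1 : ∀ i, c • δ g i ∈ W) (h2 : ∀ i, c • γ g i ∈ W) (v : V g) : c • v ∈ W := by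
  have hv : c • v = ∑ i, v.1 i • (c • δ g i) + ∑ i, v.2 i • (c • γ g i) := by
    refine Prod.ext ?_ ?_ <;> funext k <;>
      simp [δ, γ, Pi.single_apply, Finset.sum_apply, Prod.fst_sum, Prod.snd_sum,
        mul_ite, Finset.sum_ite_eq', mul_comm]
  rw [hv]
  exact W.add_mem (W.sum_mem fun i _ => W.smul_mem _ (h1 i))
    (W.sum_mem fun i _ => W.smul_mem _ (h2 i))

/-- A nonzero submodule invariant under all transvections along primitive vectors
equals `m·V` where `m` is the minimal positive coordinate gcd of its elements. -/
theorem invariant_submodule_classification (g : ℕ) (hg : 1 ≤ g)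
    (W : Submodule ℤ (V g)) (hW0 : W ≠ ⊥)
    (hW : ∀ β : V g, Primitive g β → ∀ w ∈ W, T g β w ∈ W) :
    ∃ m : ℕ, 0 < m ∧ W = (m : ℤ) • (⊤ : Submodule ℤ (V g)) ∧
      IsLeast {n : ℕ | 0 < n ∧ ∃ v ∈ W, coordGcd g v = n} m := by
  set i0 : Fin g := ⟨0, hg⟩ with hi0
  have hd : ∀ β : V g, Primitive g β → ∀ w ∈ W, symp g w β • β ∈ W := by
    intro β hβ w hw
    have h1 := hW β hβ w hw
    have h2 := W.sub_mem h1 hw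
    simpa [T] using h2
  -- step: from c•δᵢ ∈ W deduce c•γᵢ ∈ W
  have hδγ : ∀ (c : ℤ) (i : Fin g), c • δ g i ∈ W → c • γ g i ∈ W := by
    intro c i h
    have h1 := hd (δ g i + γ g i) (prim_dg g i i) _ h
    rw [symp_dg, smul_delta_fst, smul_delta_snd, sub_zero, smul_add] at h1
    simpa using W.sub_mem h1 h
  have hγδ : ∀ (c : ℤ) (i : Fin g), c • γ g i ∈ W → c • δ g i ∈ W := by
    intro c i h
    have h1 := hd (δ g i + γ g i) (prim_dg g i i) _ h
    rw [symp_dg, smul_gamma_fst, smul_gamma_snd, zero_sub, neg_smul] at h1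
    have h2 := W.neg_mem h1
    rw [neg_neg, smul_add] at h2
    simpa using W.sub_mem h2 h
  -- step: move index
  have hmove : ∀ (c : ℤ) (i j : Fin g), c • δ g i ∈ W → c • δ g j ∈ W := by
    intro c i j h
    have hγ := hδγ c i h
    have h1 := hd (δ g j + γ g i) (prim_dg g i j) _ h
    rw [symp_dg, smul_delta_fst, smul_delta_snd, sub_zero, smul_add] at h1
    simpa using W.sub_mem h1 hγ
  -- every coordinate of every element, placed on δ i0, lies in W
  have hcoord1 : ∀ w ∈ W, ∀ i : Fin g, (w.1 i) • δ g i0 ∈ W := by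
    intro w hw i
    have h1 := hd (γ g i) (prim_gamma g i) w hw
    rw [symp_gamma] at h1
    exact hmove _ i i0 (hγδ _ i h1)
  have hcoord2 : ∀ w ∈ W, ∀ i : Fin g, (w.2 i) • δ g i0 ∈ W := by
    intro w hw i
    have h1 := hd (δ g i) (prim_delta g i) w hw
    rw [symp_delta] at h1
    have h2 : (w.2 i) • δ g i ∈ W := by
      have := W.neg_mem h1
      simpa using this
    exact hmove _ i i0 h2
  -- the ideal of coefficients
  let I : Ideal ℤ :=
    { carrier := {c : ℤ | c • δ g i0 ∈ W}
      add_mem' := fun {a b} ha hb => by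
        simp only [Set.mem_setOf_eq] at *
        rw [add_smul]; exact W.add_mem ha hb
      zero_mem' := by simp only [Set.mem_setOf_eq, zero_smul]; exact W.zero_mem
      smul_mem' := fun r c hc => by
        simp only [Set.mem_setOf_eq, smul_eq_mul] at *
        rw [mul_smul]; exact W.smul_mem r hc }
  obtain ⟨d, hdI⟩ := (IsPrincipalIdealRing.principal I).principal
  have memI : ∀ c : ℤ, c ∈ I ↔ d ∣ c := by
    intro c
    rw [hdI]
    exact Ideal.mem_span_singleton
  have hdvd1 : ∀ w ∈ W, ∀ i : Fin g, d ∣ w.1 i := fun w hw i => (memI _).mp (hcoord1 w hw i)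
  have hdvd2 : ∀ w ∈ W, ∀ i : Fin g, d ∣ w.2 i := fun w hw i => (memI _).mp (hcoord2 w hw i)
  -- d ≠ 0
  obtain ⟨w₀, hw₀W, hw₀⟩ := Submodule.exists_mem_ne_zero_of_ne_bot hW0
  have hd0 : d ≠ 0 := by
    rintro rfl
    apply hw₀
    have h1 : ∀ i, w₀.1 i = 0 := fun i => by
      have := hdvd1 w₀ hw₀W i; simpa using this
    have h2 : ∀ i, w₀.2 i = 0 := fun i => by
      have := hdvd2 w₀ hw₀W i; simpa using this
    exact Prod.ext (funext h1) (funext h2)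
  set m : ℕ := d.natAbs with hm
  have hm0 : 0 < m := Int.natAbs_pos.mpr hd0
  have hdmem : d • δ g i0 ∈ W := (memI d).mpr dvd_rfl
  have hmmem : (m : ℤ) • δ g i0 ∈ W := by
    rcases Int.natAbs_eq d with h | h
    · rw [hm, ← h]; exact hdmem
    · have h2 : ((m : ℕ) : ℤ) = -d := by rw [hm]; omega
      rw [h2, neg_smul]; exact W.neg_mem hdmem
  have hmδ : ∀ i, (m : ℤ) • δ g i ∈ W := fun i => hmove _ i0 i hmmem
  have hmγ : ∀ i, (m : ℤ) • γ g i ∈ W := fun i => hδγ _ i (hmδ i)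
  -- m divides coordGcd of every element of W
  have hmdvdgcd : ∀ w ∈ W, m ∣ coordGcd g w := by
    intro w hw
    refine Finset.dvd_gcd fun i _ => ?_
    refine Nat.dvd_gcd ?_ ?_
    · exact Int.natAbs_dvd_natAbs.mpr (hdvd1 w hw i)
    · exact Int.natAbs_dvd_natAbs.mpr (hdvd2 w hw i)
  refine ⟨m, hm0, ?_, ?_, ?_⟩
  · -- W = m • ⊤
    apply le_antisymm
    · intro w hw
      rw [← SetLike.mem_coe, Submodule.coe_pointwise_smul, Set.mem_smul_set]
      refine ⟨(fun i => w.1 i / (m : ℤ), fun i => w.2 i / (m : ℤ)), Submodule.mem_top, ?_⟩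
      have hmd1 : ∀ i, (m : ℤ) ∣ w.1 i := fun i => by
        rw [hm, Int.natAbs_dvd]; exact hdvd1 w hw i
      have hmd2 : ∀ i, (m : ℤ) ∣ w.2 i := fun i => by
        rw [hm, Int.natAbs_dvd]; exact hdvd2 w hw i
      refine Prod.ext ?_ ?_ <;> funext k <;>
        simp only [Prod.smul_fst, Prod.smul_snd, Pi.smul_apply, smul_eq_mul]
      · exact Int.mul_ediv_cancel' (hmd1 k)
      · exact Int.mul_ediv_cancel' (hmd2 k)
    · intro x hx
      rw [← SetLike.mem_coe, Submodule.coe_pointwise_smul, Set.mem_smul_set] at hx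
      obtain ⟨u, -, rfl⟩ := hx
      exact smul_mem_of_basis W _ hmδ hmγ u
  · -- m ∈ S
    refine ⟨hm0, (m : ℤ) • δ g i0, hmδ i0, ?_⟩
    refine Nat.dvd_antisymm ?_ ?_
    · have := Finset.gcd_dvd (f := fun i => Int.gcd (((m : ℤ) • δ g i0).1 i) (((m : ℤ) • δ g i0).2 i)) (Finset.mem_univ i0)
      simpa [coordGcd, δ, Pi.single_apply] using this
    · refine Finset.dvd_gcd fun i _ => ?_
      by_cases h : i = i0 <;>
        simp [δ, Pi.single_apply, h, Int.gcd]
  · -- lower bound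
    rintro n ⟨hn0, v, hvW, rfl⟩
    exact Nat.le_of_dvd hn0 (hmdvdgcd v hvW)
end
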